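/- Let n ≥ 2 be an even integer and let 𝒫_n(x) = Σ_{j=0}^{n−1} d_{n,j} x^j with d_{n,j} = C(n−1,j)^2 + C(n−1,j+1)·C(n−1,j−1). Then 𝒩_n(−1) = 0 and 𝒫_n(−1) = 0, i.e. 𝒫_n and 𝒩_n share the common zero x = −1; moreover, 𝒫_n has n−1 real simple zeros and, writing w_1 < ⋯ < w_{n−1} for the zeros of 𝒫_n and u_1 < ⋯ < u_{n−2} for the zeros of the quotient polynomial Q_n defined by (x+1)Q_n(x) = 𝒩_n(x), one has w_1 < u_1 < w_2 < u_2 < ⋯ < u_{n−2} < w_{n−1}, i.e. 𝒫_n(x) ≺ 𝒩_n(x)/(x+1). -/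

import Mathlib

open Polynomial

/-- The Narayana numbers `c_{n,k} = (1/n) C(n,k) C(n,k−1)` (for `1 ≤ k ≤ n`). -/
noncomputable def narayanaNum (n k : ℕ) : ℝ :=
  (n.choose k : ℝ) * (n.choose (k - 1) : ℝ) / (n : ℝ)

/-- The reduced Narayana polynomial `𝒩_n(x) = N_n(x)/x = Σ_{j=0}^{n−1} c_{n,j+1} x^j`. -/
noncomputable def redNarayana (n : ℕ) : Polynomial ℝ :=
  ∑ j ∈ Finset.range n, Polynomial.C (narayanaNum n (j + 1)) * Polynomial.X ^ j

/-- The coefficients `d_{n,j} = C(n−1,j)² + C(n−1,j+1)·C(n−1,j−1)`, with out-of-range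
binomial entries equal to `0` (in particular the `j−1` entry vanishes for `j = 0`). -/
noncomputable def narayanaD (n j : ℕ) : ℝ :=
  ((n - 1).choose j : ℝ) ^ 2 +
    ((n - 1).choose (j + 1) : ℝ) * (if j = 0 then 0 else ((n - 1).choose (j - 1) : ℝ))

/-- The polynomial `𝒫_n(x) = Σ_{j=0}^{n−1} d_{n,j} x^j`. -/
noncomputable def narayanaP (n : ℕ) : Polynomial ℝ :=
  ∑ j ∈ Finset.range n, Polynomial.C (narayanaD n j) * Polynomial.X ^ j

/-!
Comparing coefficients gives the differential identity
`(1 - x) 𝒫_n(x) = (1 - (2n - 1) x) 𝒩_n(x) + 2x (1 + x) 𝒩_n'(x)`.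
For even `n` the palindromic polynomial `𝒩_n` has odd degree, so `𝒩_n(-1) = 0`, and the identity
at `x = -1` gives `𝒫_n(-1) = 0`. Writing `𝒩_n = (x + 1) Q_n`, at a zero `u` of `Q_n` it reads
`(1 - u) 𝒫_n(u) = 2u (1 + u)² Q_n'(u)`. The zeros of `Q_n` are negative (the coefficients of `𝒩_n`
are positive) and differ from `-1`, because `Q_n(-1) = 𝒩_n'(-1) = ±C(n - 1, n/2 - 1)`; hence
`𝒫_n(u_i)` has the sign opposite to `Q_n'(u_i)`, which alternates. Together with `𝒫_n(0) = 1` and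
`𝒫_n(x) → -∞` as `x → -∞`, this gives a sign change of `𝒫_n` in each of the `n - 1` gaps of
`-∞ < u_1 < ⋯ < u_{n-2} < 0`, and `deg 𝒫_n = n - 1` leaves room for no other zero.
-/

theorem neg_one_pow_eq_neg_of_odd_add {R : Type*} [Monoid R] [HasDistribNeg R] {a b : ℕ}
    (h : Odd (a + b)) : (-1 : R) ^ a = -(-1) ^ b := by
  calc (-1 : R) ^ a = (-1) ^ a * ((-1) ^ b * (-1) ^ b) := by
        rw [← pow_add, ← two_mul, pow_mul, neg_one_sq, one_pow, mul_one]
    _ = (-1) ^ (a + b) * (-1) ^ b := by rw [pow_add, mul_assoc]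
    _ = -(-1) ^ b := by rw [h.neg_one_pow, neg_one_mul]

theorem cast_choose_pred_eq {n : ℕ} (hn : 0 < n) (k : ℕ) :
    ((n - 1).choose k : ℝ) = n.choose (k + 1) * (k + 1) / n := by
  have h := Nat.add_one_mul_choose_eq (n - 1) k
  rw [Nat.sub_add_cancel hn] at h
  rw [eq_div_iff (by positivity)]
  exact_mod_cast by linarith

-- Both sides vanish for `k > n`, which is why the identity needs no side condition.
theorem cast_choose_succ_eq (n k : ℕ) :
    (n.choose (k + 1) : ℝ) = n.choose k * (n - k) / (k + 1) := by
  rw [eq_div_iff (by positivity)]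
  rcases le_or_gt k n with hk | hk
  · have h := Nat.choose_succ_right_eq n k
    rw [← Nat.cast_sub hk]
    exact_mod_cast h
  · simp [Nat.choose_eq_zero_of_lt hk, Nat.choose_eq_zero_of_lt (by omega : n < k + 1)]

theorem coeff_X_mul_derivative {R : Type*} [Semiring R] (p : R[X]) (k : ℕ) :
    (X * derivative p).coeff k = k * p.coeff k := by
  cases k with
  | zero => simp
  | succ k => rw [coeff_X_mul, coeff_derivative, ← Nat.cast_succ, Nat.cast_comm]

theorem coeff_one_sub_X_pow {R : Type*} [CommRing R] (N k : ℕ) :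
    ((1 - X : R[X]) ^ N).coeff k = (-1) ^ k * N.choose k := by
  have h : (1 - X : R[X]) ^ N = ((1 + X) ^ N).comp (C (-1) * X) := by
    simp [sub_eq_add_neg]
  rw [h, comp_C_mul_X_coeff, coeff_one_add_X_pow, mul_comm]

theorem sum_range_neg_one_pow_mul_choose_mul_choose (m : ℕ) :
    ∑ k ∈ Finset.range (2 * m + 1),
        (-1 : ℝ) ^ k * (2 * m + 1).choose k * (2 * m + 2).choose (k + 2)
      = (-1) ^ m * (2 * m + 1).choose m := by
  set p : ℝ[X] := expand ℝ 2 ((1 - X) ^ (2 * m + 1))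
  have hprod : (1 - X : ℝ[X]) ^ (2 * m + 1) * (1 + X) ^ (2 * m + 2) = p + p * X := by
    simp only [p, map_pow, map_sub, map_one, expand_X]
    rw [pow_succ (1 + X), ← mul_assoc, ← mul_pow]
    ring
  have hshift : (p * X).coeff (2 * m) = 0 := by
    cases m with
    | zero => simp
    | succ m =>
      rw [show 2 * (m + 1) = 2 * m + 1 + 1 by ring, coeff_mul_X, coeff_expand two_pos]
      simp
  have h := congrArg (coeff · (2 * m)) hprod
  simp only [coeff_add, hshift, add_zero, p, coeff_expand two_pos, dvd_mul_right,
    if_true, coeff_one_sub_X_pow, coeff_mul, Finset.Nat.sum_antidiagonal_eq_sum_range_succ_mk,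
    coeff_one_add_X_pow, Nat.succ_eq_add_one] at h
  rw [show 2 * m / 2 = m by omega] at h
  rw [← h]
  refine Finset.sum_congr rfl fun k hk => ?_
  rw [Nat.choose_symm_of_eq_add (by simp at hk; omega : 2 * m + 2 = k + 2 + (2 * m - k))]

theorem exists_lt_eval_neg_of_monic_of_odd {p : ℝ[X]} (hp : p.Monic) (hodd : Odd p.natDegree)
    (y : ℝ) : ∃ x < y, p.eval x < 0 := by
  have hlead : (p.comp (-X)).leadingCoeff = -1 := by
    rw [leadingCoeff_comp (by simp), hp.leadingCoeff, leadingCoeff_neg, leadingCoeff_X,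
      hodd.neg_one_pow, one_mul]
  have hdeg : 0 < (p.comp (-X)).degree := by
    rw [← natDegree_pos_iff_degree_pos, natDegree_comp]
    simpa using hodd.pos
  have htendsto := tendsto_atBot_of_leadingCoeff_nonpos _ hdeg (by rw [hlead]; norm_num)
  obtain ⟨x, hx, hxy⟩ := ((htendsto.eventually (Filter.eventually_lt_atBot 0)).and
    (Filter.eventually_gt_atTop (-y))).exists
  exact ⟨-x, by linarith, by simpa using hx⟩

theorem eq_prod_X_sub_C_of_monic {R : Type*} [CommRing R] [IsDomain R] {Q : R[X]} {m : ℕ}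
    (hQ : Q.Monic) (hdeg : Q.natDegree = m) {u : ℕ → R} (hu : Set.InjOn u (Set.Iio m))
    (hroot : ∀ i < m, Q.IsRoot (u i)) :
    Q = ∏ i ∈ Finset.range m, (X - C (u i)) := by
  classical
  have hinj : Set.InjOn u (Finset.range m) := by simpa using hu
  set s := (Finset.range m).image u
  have hdvd : ∏ a ∈ s, (X - C a) ∣ Q := by
    refine (Multiset.prod_X_sub_C_dvd_iff_le_roots hQ.ne_zero s.val).2
      ((Multiset.le_iff_subset s.nodup).2 fun a ha => ?_)
    obtain ⟨i, hi, rfl⟩ := Finset.mem_image.1 (Finset.mem_def.2 ha)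
    exact (mem_roots hQ.ne_zero).2 (hroot i (Finset.mem_range.1 hi))
  rw [← Finset.prod_image (f := fun a => X - C a) hinj]
  refine eq_of_monic_of_dvd_of_natDegree_le (monic_prod_X_sub_C _ _) hQ hdvd ?_
  rw [natDegree_finsetProd_X_sub_C_eq_card, Finset.card_image_of_injOn hinj, Finset.card_range,
    hdeg]

theorem eval_derivative_prod_X_sub_C {R ι : Type*} [CommRing R] [DecidableEq ι] {s : Finset ι}
    (u : ι → R) {i : ι} (hi : i ∈ s) :
    (derivative (∏ j ∈ s, (X - C (u j)))).eval (u i) = ∏ j ∈ s.erase i, (u i - u j) := by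
  rw [derivative_prod_finset, eval_finsetSum, Finset.sum_eq_single i]
  · simp [eval_prod]
  · intro j _ hji
    simp only [derivative_X_sub_C, mul_one, eval_prod, eval_sub, eval_X, eval_C]
    exact Finset.prod_eq_zero (Finset.mem_erase.2 ⟨Ne.symm hji, hi⟩) (sub_self _)
  · exact fun h => absurd hi h

theorem neg_one_pow_mul_prod_sub_pos {u : ℕ → ℝ} {m : ℕ} (hu : StrictMonoOn u (Set.Iio m))
    {i : ℕ} (hi : i < m) :
    0 < (-1) ^ (m - 1 - i) * ∏ j ∈ (Finset.range m).erase i, (u i - u j) := by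
  have hsplit : (Finset.range m).erase i = Finset.range i ∪ Finset.Ioo i m := by
    ext j; simp; omega
  have hdisj : Disjoint (Finset.range i) (Finset.Ioo i m) := by
    rw [Finset.disjoint_left]; intro j; simp; omega
  have hright : ∏ j ∈ Finset.Ioo i m, (u i - u j)
      = (-1) ^ (m - 1 - i) * ∏ j ∈ Finset.Ioo i m, (u j - u i) := by
    rw [show m - 1 - i = (Finset.Ioo i m).card by simp; omega, ← Finset.prod_neg]
    simp
  have hleft_pos : 0 < ∏ j ∈ Finset.range i, (u i - u j) := Finset.prod_pos fun j hj => by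
    simp at hj
    exact sub_pos.2 (hu (by simp; omega) (by simpa using hi) hj)
  have hright_pos : 0 < ∏ j ∈ Finset.Ioo i m, (u j - u i) := Finset.prod_pos fun j hj => by
    simp at hj
    exact sub_pos.2 (hu (by simpa using hi) (by simpa using hj.2) hj.1)
  have hsq : (-1 : ℝ) ^ (m - 1 - i) * (-1) ^ (m - 1 - i) = 1 := by
    rw [← pow_add]; exact Even.neg_one_pow ⟨_, rfl⟩
  rw [hsplit, Finset.prod_union hdisj, hright, mul_left_comm, ← mul_assoc ((-1 : ℝ) ^ _), hsq,
    one_mul]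
  exact mul_pos hleft_pos hright_pos

theorem exists_roots_of_alternating_signs {p : ℝ[X]} (hp : p ≠ 0) {m : ℕ}
    (hdeg : p.natDegree ≤ m) {v : ℕ → ℝ} (hv : StrictMonoOn v (Set.Iic m))
    (hsign : ∀ k ≤ m, 0 < (-1) ^ k * p.eval (v k)) :
    ∃ w : ℕ → ℝ, StrictMonoOn w (Set.Iio m) ∧ (∀ k < m, v k < w k ∧ w k < v (k + 1)) ∧
      ∀ r, p.eval r = 0 ↔ ∃ k < m, w k = r := by
  have hroot : ∀ k < m, ∃ r, (v k < r ∧ r < v (k + 1)) ∧ p.eval r = 0 := by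
    intro k hk
    have hvk : v k < v (k + 1) := hv (by simp; omega) (by simpa using hk) (Nat.lt_succ_self k)
    have hcont : ContinuousOn (fun x => (-1) ^ k * p.eval x) (Set.Icc (v k) (v (k + 1))) :=
      (continuous_const.mul p.continuous).continuousOn
    have hend : (-1) ^ k * p.eval (v (k + 1)) < 0 := by
      have := hsign (k + 1) hk
      rw [pow_succ] at this
      linarith
    obtain ⟨r, hr, hr0⟩ := intermediate_value_Ioo' hvk.le hcont ⟨hend, hsign k hk.le⟩
    exact ⟨r, hr, by simpa using hr0⟩
  choose! w hw hw0 using hroot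
  have hmono : StrictMonoOn w (Set.Iio m) := by
    intro k hk l hl hkl
    calc w k < v (k + 1) := (hw k hk).2
      _ ≤ v l := hv.monotoneOn (by simp at hk ⊢; omega) (by simp at hl ⊢; omega) hkl
      _ < w l := (hw l hl).1
  refine ⟨w, hmono, hw, fun r => ⟨fun hr => ?_, fun ⟨k, hk, hkr⟩ => hkr ▸ hw0 k hk⟩⟩
  by_contra! hnot
  have hinj : Set.InjOn w (Finset.range m) := by simpa using hmono.injOn
  set S := insert r ((Finset.range m).image w)
  have hcard : S.card = m + 1 := by
    rw [Finset.card_insert_of_notMem (by simpa using hnot), Finset.card_image_of_injOn hinj,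
      Finset.card_range]
  refine hp (eq_zero_of_natDegree_lt_card_of_eval_eq_zero' p S (fun x hx => ?_) (by omega))
  rcases Finset.mem_insert.1 hx with rfl | hx
  · exact hr
  · obtain ⟨k, hk, rfl⟩ := Finset.mem_image.1 hx
    exact hw0 k (Finset.mem_range.1 hk)

theorem exists_roots_interlacing {p : ℝ[X]} (hp : p ≠ 0) {m : ℕ} (hdeg : p.natDegree ≤ m + 1)
    {u : ℕ → ℝ} (hu : StrictMonoOn u (Set.Iio m)) {a b : ℝ} (hab : a < b)
    (hau : ∀ i < m, a < u i) (hub : ∀ i < m, u i < b) (hpa : p.eval a < 0)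
    (hpu : ∀ i < m, 0 < (-1) ^ i * p.eval (u i)) (hpb : 0 < (-1) ^ m * p.eval b) :
    ∃ w : ℕ → ℝ, StrictMonoOn w (Set.Iio (m + 1)) ∧
      (∀ r, p.eval r = 0 ↔ ∃ i < m + 1, w i = r) ∧ ∀ i < m, w i < u i ∧ u i < w (i + 1) := by
  set v : ℕ → ℝ := fun k => if k = 0 then a else if k ≤ m then u (k - 1) else b
  have hv : StrictMonoOn v (Set.Iic (m + 1)) := by
    refine strictMonoOn_Iic_of_lt_succ fun k hk => ?_
    rw [Order.succ_eq_add_one]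
    rcases Nat.eq_zero_or_pos k with rfl | hk0
    · rcases Nat.eq_zero_or_pos m with rfl | hm
      · simpa [v] using hab
      · simpa [v, hm.ne', Nat.one_le_iff_ne_zero] using hau 0 hm
    · rcases Nat.lt_or_ge k m with hkm | hkm
      · simp only [v, hk0.ne', Nat.add_one_ne_zero, hkm.le, show k + 1 ≤ m from hkm, if_false,
          if_true, Nat.add_sub_cancel]
        exact hu (by simp; omega) (by simpa using hkm) (by omega)
      · simp only [v, hk0.ne', Nat.add_one_ne_zero, if_false, show k ≤ m by omega,
          show ¬ k + 1 ≤ m by omega, if_true]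
        exact hub _ (by omega)
  have hsign : ∀ k ≤ m + 1, 0 < (-1) ^ k * (-p).eval (v k) := by
    intro k hk
    rcases Nat.eq_zero_or_pos k with rfl | hk0
    · simpa [v] using hpa
    · obtain ⟨i, rfl⟩ := Nat.exists_eq_add_of_lt hk0
      rcases Nat.lt_or_ge i m with him | him
      · simpa [v, show i + 1 ≤ m by omega, pow_succ] using hpu i him
      · obtain rfl : i = m := by omega
        simpa [v, pow_succ] using hpb
  obtain ⟨w, hw, hwv, hroots⟩ :=
    exists_roots_of_alternating_signs (neg_ne_zero.2 hp) (by simpa using hdeg) hv hsign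
  refine ⟨w, hw, by simpa using hroots, fun i hi => ⟨?_, ?_⟩⟩
  · simpa [v, show i + 1 ≤ m by omega] using (hwv i (by omega)).2
  · simpa [v, show i + 1 ≤ m by omega] using (hwv (i + 1) (by omega)).1

theorem coeff_redNarayana (n k : ℕ) : (redNarayana n).coeff k = narayanaNum n (k + 1) := by
  simp only [redNarayana, finsetSum_coeff, coeff_C_mul_X_pow, Finset.sum_ite_eq,
    Finset.mem_range]
  split_ifs with hk
  · rfl
  · simp [narayanaNum, Nat.choose_eq_zero_of_lt (by omega : n < k + 1)]

theorem coeff_narayanaP {n : ℕ} (hn : 0 < n) (k : ℕ) : (narayanaP n).coeff k = narayanaD n k := by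
  simp only [narayanaP, finsetSum_coeff, coeff_C_mul_X_pow, Finset.sum_ite_eq,
    Finset.mem_range]
  split_ifs with hk
  · rfl
  · simp [narayanaD, Nat.choose_eq_zero_of_lt (by omega : n - 1 < k),
      Nat.choose_eq_zero_of_lt (by omega : n - 1 < k + 1)]

theorem narayanaNum_succ (n k : ℕ) :
    narayanaNum n (k + 1) = n.choose (k + 1) * n.choose k / n := by
  simp [narayanaNum]

theorem narayanaD_eq {n : ℕ} (hn : 0 < n) (k : ℕ) :
    narayanaD n k = (n.choose (k + 1) * (k + 1) / n) ^ 2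
      + (n.choose (k + 2) * (k + 2) / n) * (n.choose k * k / n) := by
  have hprev : (if k = 0 then 0 else ((n - 1).choose (k - 1) : ℝ)) = n.choose k * k / n := by
    split_ifs with hk
    · simp [hk]
    · obtain ⟨j, rfl⟩ := Nat.exists_eq_add_one_of_ne_zero hk
      simp [cast_choose_pred_eq hn]
  rw [narayanaD, hprev, cast_choose_pred_eq hn, cast_choose_pred_eq hn]
  push_cast
  ring

theorem narayanaD_succ_sub {n : ℕ} (hn : 0 < n) (k : ℕ) :
    narayanaD n (k + 1) - narayanaD n k
      = (2 * k + 3) * narayanaNum n (k + 2) + (2 * k + 1 - 2 * n) * narayanaNum n (k + 1) := by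
  rw [narayanaD_eq hn, narayanaD_eq hn, narayanaNum_succ, narayanaNum_succ]
  simp only [show k + 1 + 1 = k + 2 by ring, show k + 1 + 2 = k + 3 by ring]
  rw [cast_choose_succ_eq n (k + 2), cast_choose_succ_eq n (k + 1), cast_choose_succ_eq n k]
  push_cast
  field_simp
  ring

theorem one_sub_X_mul_narayanaP {n : ℕ} (hn : 0 < n) :
    (1 - X) * narayanaP n = (1 - C (2 * n - 1 : ℝ) * X) * redNarayana n
      + 2 * (1 + X) * (X * derivative (redNarayana n)) := by
  have hD (k : ℕ) : (X * derivative (redNarayana n)).coeff k = k * narayanaNum n (k + 1) := by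
    rw [coeff_X_mul_derivative, coeff_redNarayana]
  generalize X * derivative (redNarayana n) = D at hD
  ext k
  rw [show (2 : ℝ[X]) = C 2 from rfl]
  cases k with
  | zero =>
    simp [coeff_narayanaP hn, coeff_redNarayana, hD, narayanaD, narayanaNum, hn.ne']
  | succ k =>
    simp only [sub_mul, add_mul, one_mul, mul_assoc, coeff_add, coeff_sub, coeff_C_mul,
      coeff_X_mul, coeff_narayanaP hn, coeff_redNarayana, hD]
    rw [narayanaD_succ_sub hn]
    push_cast
    ring

theorem natDegree_redNarayana_le (n : ℕ) : (redNarayana n).natDegree ≤ n - 1 := by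
  refine natDegree_le_iff_coeff_eq_zero.2 fun k hk => ?_
  simp [coeff_redNarayana, narayanaNum, Nat.choose_eq_zero_of_lt (by omega : n < k + 1)]

theorem coeff_redNarayana_pred {n : ℕ} (hn : 0 < n) : (redNarayana n).coeff (n - 1) = 1 := by
  rw [coeff_redNarayana, Nat.sub_add_cancel hn, narayanaNum, Nat.choose_self,
    Nat.choose_symm (by omega : 1 ≤ n), Nat.choose_one_right]
  simp [hn.ne']

theorem natDegree_redNarayana {n : ℕ} (hn : 0 < n) : (redNarayana n).natDegree = n - 1 :=
  natDegree_eq_of_le_of_coeff_ne_zero (natDegree_redNarayana_le n)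
    (by simp [coeff_redNarayana_pred hn])

theorem monic_redNarayana {n : ℕ} (hn : 0 < n) : (redNarayana n).Monic :=
  monic_of_natDegree_le_of_coeff_eq_one _ (natDegree_redNarayana_le n) (coeff_redNarayana_pred hn)

theorem natDegree_narayanaP_le {n : ℕ} (hn : 0 < n) : (narayanaP n).natDegree ≤ n - 1 := by
  refine natDegree_le_iff_coeff_eq_zero.2 fun k hk => ?_
  simp [coeff_narayanaP hn, narayanaD, Nat.choose_eq_zero_of_lt hk,
    Nat.choose_eq_zero_of_lt (by omega : n - 1 < k + 1)]

theorem coeff_narayanaP_pred {n : ℕ} (hn : 0 < n) : (narayanaP n).coeff (n - 1) = 1 := by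
  simp [coeff_narayanaP hn, narayanaD]

theorem natDegree_narayanaP {n : ℕ} (hn : 0 < n) : (narayanaP n).natDegree = n - 1 :=
  natDegree_eq_of_le_of_coeff_ne_zero (natDegree_narayanaP_le hn)
    (by simp [coeff_narayanaP_pred hn])

theorem monic_narayanaP {n : ℕ} (hn : 0 < n) : (narayanaP n).Monic :=
  monic_of_natDegree_le_of_coeff_eq_one _ (natDegree_narayanaP_le hn) (coeff_narayanaP_pred hn)

theorem narayanaP_eval_zero {n : ℕ} (hn : 0 < n) : (narayanaP n).eval 0 = 1 := by
  simp [← coeff_zero_eq_eval_zero, coeff_narayanaP hn, narayanaD]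

theorem redNarayana_eval_pos {n : ℕ} (hn : 0 < n) {t : ℝ} (ht : 0 ≤ t) :
    0 < (redNarayana n).eval t := by
  simp only [redNarayana, eval_finsetSum, eval_mul, eval_C, eval_pow, eval_X, narayanaNum]
  exact Finset.sum_pos' (fun j _ => by positivity) ⟨0, by simpa, by simp [hn.ne']⟩

theorem narayanaNum_symm {n j : ℕ} (hj : j < n) :
    narayanaNum n (n - j) = narayanaNum n (j + 1) := by
  rw [narayanaNum, narayanaNum, Nat.choose_symm hj.le, show n - j - 1 = n - (j + 1) by omega,
    Nat.choose_symm hj, Nat.add_sub_cancel, mul_comm]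

theorem redNarayana_eval_neg_one {n : ℕ} (hn : Even n) : (redNarayana n).eval (-1) = 0 := by
  have hsign {j : ℕ} (hj : j < n) : (-1 : ℝ) ^ (n - 1 - j) = -(-1) ^ j := by
    obtain ⟨a, rfl⟩ := hn
    exact neg_one_pow_eq_neg_of_odd_add ⟨a - 1, by omega⟩
  have hterm : ∀ j ∈ Finset.range n,
      narayanaNum n (n - 1 - j + 1) * (-1 : ℝ) ^ (n - 1 - j)
        = -(narayanaNum n (j + 1) * (-1) ^ j) := by
    intro j hj
    rw [Finset.mem_range] at hj
    rw [show n - 1 - j + 1 = n - j by omega, narayanaNum_symm hj, hsign hj, mul_neg]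
  have hS := Finset.sum_range_reflect (fun j => narayanaNum n (j + 1) * (-1 : ℝ) ^ j) n
  rw [Finset.sum_congr rfl hterm, Finset.sum_neg_distrib] at hS
  simp only [redNarayana, eval_finsetSum, eval_mul, eval_C, eval_pow, eval_X]
  linarith

theorem narayanaP_eval_neg_one {n : ℕ} (hn : 0 < n) (heven : Even n) :
    (narayanaP n).eval (-1) = 0 := by
  have h := congrArg (eval (-1)) (one_sub_X_mul_narayanaP hn)
  simp only [eval_mul, eval_sub, eval_add, eval_one, eval_X, eval_C, eval_ofNat,
    redNarayana_eval_neg_one heven] at h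
  linarith

theorem eval_neg_one_derivative_redNarayana (m : ℕ) :
    (derivative (redNarayana (2 * m + 2))).eval (-1) = (-1) ^ m * (2 * m + 1).choose m := by
  have hdeg : (derivative (redNarayana (2 * m + 2))).natDegree < 2 * m + 1 :=
    (natDegree_derivative_le _).trans_lt (by have := natDegree_redNarayana_le (2 * m + 2); omega)
  have hcoeff (k : ℕ) : (derivative (redNarayana (2 * m + 2))).coeff k
      = (2 * m + 1).choose k * (2 * m + 2).choose (k + 2) := by
    have h := cast_choose_pred_eq (by omega : 0 < 2 * m + 2) k
    rw [show 2 * m + 2 - 1 = 2 * m + 1 by omega] at h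
    rw [coeff_derivative, coeff_redNarayana, narayanaNum_succ, h]
    push_cast
    field_simp
  rw [eval_eq_sum_range' hdeg, ← sum_range_neg_one_pow_mul_choose_mul_choose]
  exact Finset.sum_congr rfl fun k _ => by rw [hcoeff]; ring

section Quotient

variable {n : ℕ} {Q : ℝ[X]}

theorem root_neg_of_mul_eq_redNarayana (hn : 0 < n) (hQ : (X + C 1) * Q = redNarayana n)
    {x : ℝ} (hx : Q.eval x = 0) : x < 0 := by
  by_contra! h
  have := redNarayana_eval_pos hn h
  rw [← hQ, eval_mul, hx, mul_zero] at this
  exact this.false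

theorem one_sub_mul_narayanaP_eval (hn : 0 < n) (hQ : (X + C 1) * Q = redNarayana n) {x : ℝ}
    (hx : Q.eval x = 0) :
    (1 - x) * (narayanaP n).eval x = 2 * x * (1 + x) ^ 2 * (derivative Q).eval x := by
  have h := congrArg (eval x) (one_sub_X_mul_narayanaP hn)
  rw [← hQ] at h
  simp only [eval_mul, eval_add, eval_sub, eval_one, eval_X, eval_C, eval_ofNat, derivative_mul,
    derivative_add, derivative_X, derivative_C, hx] at h
  linear_combination h

theorem eval_neg_one_ne_zero_of_mul_eq_redNarayana {k : ℕ}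
    (hQ : (X + C 1) * Q = redNarayana (2 * k + 2)) : Q.eval (-1) ≠ 0 := by
  have h := eval_neg_one_derivative_redNarayana k
  rw [← hQ] at h
  simp only [derivative_mul, derivative_add, derivative_X, derivative_C, eval_add, eval_mul,
    eval_X, eval_C] at h
  norm_num at h
  rw [h]
  exact mul_ne_zero (pow_ne_zero _ (by norm_num))
    (by exact_mod_cast (Nat.choose_pos (by omega)).ne')

theorem neg_one_pow_mul_narayanaP_eval_pos {k : ℕ} (hQ : (X + C 1) * Q = redNarayana (2 * k + 2))
    {u : ℕ → ℝ} (hu : StrictMonoOn u (Set.Iio (2 * k))) (hroot : ∀ i < 2 * k, Q.eval (u i) = 0)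
    {i : ℕ} (hi : i < 2 * k) : 0 < (-1) ^ i * (narayanaP (2 * k + 2)).eval (u i) := by
  have hmonic : Q.Monic := (monic_X_add_C 1).of_mul_monic_left (hQ ▸ monic_redNarayana (by omega))
  have hdeg : Q.natDegree = 2 * k := by
    have h := (monic_X_add_C (1 : ℝ)).natDegree_mul hmonic
    rw [hQ, natDegree_redNarayana (by omega), natDegree_X_add_C] at h
    omega
  have hQ' : 0 < (-1) ^ (2 * k - 1 - i) * (derivative Q).eval (u i) := by
    rw [eq_prod_X_sub_C_of_monic hmonic hdeg hu.injOn hroot,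
      eval_derivative_prod_X_sub_C u (Finset.mem_range.2 hi)]
    exact neg_one_pow_mul_prod_sub_pos hu hi
  have hneg : u i < 0 := root_neg_of_mul_eq_redNarayana (by omega) hQ (hroot i hi)
  have hne : 1 + u i ≠ 0 := fun h => eval_neg_one_ne_zero_of_mul_eq_redNarayana hQ (by
    rw [show (-1 : ℝ) = u i by linarith]; exact hroot i hi)
  have hpar : (-1 : ℝ) ^ i = -(-1) ^ (2 * k - 1 - i) :=
    neg_one_pow_eq_neg_of_odd_add ⟨k - 1, by omega⟩
  have hprod : 0 < (1 - u i) * ((-1) ^ i * (narayanaP (2 * k + 2)).eval (u i)) := by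
    have h := one_sub_mul_narayanaP_eval (by omega) hQ (hroot i hi)
    calc 0 < -2 * u i * (1 + u i) ^ 2 * ((-1) ^ (2 * k - 1 - i) * (derivative Q).eval (u i)) :=
          mul_pos (mul_pos (by linarith) (by positivity)) hQ'
      _ = (1 - u i) * ((-1) ^ i * (narayanaP (2 * k + 2)).eval (u i)) := by
          rw [hpar]; linear_combination (-1) ^ (2 * k - 1 - i) * h
  exact pos_of_mul_pos_right hprod (by linarith)

end Quotient

/-- for even `n ≥ 2`, both `𝒩_n` and `𝒫_n` vanish at `x = −1`, `𝒫_n` has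
`n−1` real simple zeros `w 0 < … < w (n-2)`, and they interlace with the zeros
`u 0 < … < u (n-3)` of the quotient `Q_n = 𝒩_n/(x+1)`: `𝒫_n(x) ≺ 𝒩_n(x)/(x+1)`. -/
theorem stmt_16 (n : ℕ) (hn : 2 ≤ n) (heven : Even n)
    (Q : Polynomial ℝ) (hQ : (Polynomial.X + Polynomial.C 1) * Q = redNarayana n)
    (u : ℕ → ℝ)
    (hu : ∀ i j : ℕ, i < j → j < n - 2 → u i < u j)
    (huroots : ∀ r : ℝ, Q.eval r = 0 ↔ ∃ i < n - 2, u i = r) :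
    (redNarayana n).eval (-1) = 0 ∧
    (narayanaP n).eval (-1) = 0 ∧
    (∃ w : ℕ → ℝ, (∀ i j : ℕ, i < j → j < n - 1 → w i < w j) ∧
      (∀ r : ℝ, (narayanaP n).eval r = 0 ↔ ∃ i < n - 1, w i = r) ∧
      (∀ i < n - 2, w i < u i) ∧ (∀ i < n - 2, u i < w (i + 1))) := by
  obtain ⟨k, rfl⟩ : ∃ k, n = 2 * k + 2 := ⟨n / 2 - 1, by obtain ⟨j, rfl⟩ := heven; omega⟩
  simp only [show 2 * k + 2 - 2 = 2 * k by omega, show 2 * k + 2 - 1 = 2 * k + 1 by omega]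
    at hu huroots ⊢
  have hu' : StrictMonoOn u (Set.Iio (2 * k)) := fun i hi j hj hij => hu i j hij hj
  have hroot (i : ℕ) (hi : i < 2 * k) : Q.eval (u i) = 0 := (huroots _).2 ⟨i, hi, rfl⟩
  have hmonic := monic_narayanaP (n := 2 * k + 2) (by omega)
  have hdeg := natDegree_narayanaP (n := 2 * k + 2) (by omega)
  obtain ⟨a, ha, hPa⟩ := exists_lt_eval_neg_of_monic_of_odd hmonic (by rw [hdeg]; exact ⟨k, rfl⟩)
    (min (u 0) 0)
  have hau (i : ℕ) (hi : i < 2 * k) : a < u i :=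
    (ha.trans_le (min_le_left _ _)).trans_le (hu'.monotoneOn (by simp; omega) (by simpa) (by omega))
  obtain ⟨w, hw, hroots, hinter⟩ := exists_roots_interlacing hmonic.ne_zero hdeg.le hu'
    (ha.trans_le (min_le_right _ _)) hau
    (fun i hi => root_neg_of_mul_eq_redNarayana (by omega) hQ (hroot i hi)) hPa
    (fun i hi => neg_one_pow_mul_narayanaP_eval_pos hQ hu' hroot hi)
    (by simp [narayanaP_eval_zero, Even.neg_one_pow ⟨k, two_mul k⟩])
  exact ⟨redNarayana_eval_neg_one ⟨k + 1, by ring⟩,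
    narayanaP_eval_neg_one (by omega) ⟨k + 1, by ring⟩,
    w, fun i j hij hj => hw (hij.trans hj) hj hij, hroots,
    fun i hi => (hinter i hi).1, fun i hi => (hinter i hi).2⟩
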